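/- Let g : ℝ^d → ℝ^d satisfy the dissipativity condition ⟨x, g(x)⟩ ≥ m‖x‖^{1+γ} − b for all x, and the bound ‖g(x)‖² ≤ 2M²‖x‖^{2γ} + 2B². Then for every step-size η with 0 < η ≤ m/M² and every x ∈ ℝ^d: ‖x − η g(x)‖² ≤ ‖x‖² + 2η(b + m) + 2η²B². -/

import Mathlib

theorem Real.rpow_le_rpow_add_one {t p q : ℝ} (ht : 0 ≤ t) (hp : 0 ≤ p) (hpq : p ≤ q) :
    t ^ p ≤ t ^ q + 1 := by
  rcases le_total t 1 with h | h
  · linarith [Real.rpow_le_one ht h hp, Real.rpow_nonneg ht q]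
  · linarith [Real.rpow_le_rpow_of_exponent_le h hpq]

theorem norm_sub_smul_sq {E : Type*} [NormedAddCommGroup E] [InnerProductSpace ℝ E]
    (x v : E) {η : ℝ} (hη : 0 ≤ η) :
    ‖x - η • v‖ ^ 2 = ‖x‖ ^ 2 - 2 * η * inner ℝ x v + η ^ 2 * ‖v‖ ^ 2 := by
  rw [norm_sub_sq_real, inner_smul_right, norm_smul, Real.norm_of_nonneg hη]
  ring

theorem norm_sub_smul_sq_le_of_dissipative {E : Type*} [NormedAddCommGroup E]
    [InnerProductSpace ℝ E] {x v : E} {m b M B γ η : ℝ} (hm : 0 < m) (hM : 0 < M)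
    (hγ0 : 0 ≤ γ) (hγ1 : γ ≤ 1)
    (hdiss : m * ‖x‖ ^ (1 + γ) - b ≤ inner ℝ x v)
    (hgrow : ‖v‖ ^ 2 ≤ 2 * M ^ 2 * ‖x‖ ^ (2 * γ) + 2 * B ^ 2)
    (hη0 : 0 ≤ η) (hη : η ≤ m / M ^ 2) :
    ‖x - η • v‖ ^ 2 ≤ ‖x‖ ^ 2 + 2 * η * (b + m) + 2 * η ^ 2 * B ^ 2 := by
  have hηM : η * M ^ 2 ≤ m := (le_div_iff₀ (by positivity)).1 hη
  have hgrowth_absorbed : η ^ 2 * M ^ 2 * ‖x‖ ^ (2 * γ) ≤ η * m * (‖x‖ ^ (1 + γ) + 1) :=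
    calc η ^ 2 * M ^ 2 * ‖x‖ ^ (2 * γ) = η * (η * M ^ 2) * ‖x‖ ^ (2 * γ) := by ring
      _ ≤ η * m * ‖x‖ ^ (2 * γ) := by gcongr
      _ ≤ η * m * (‖x‖ ^ (1 + γ) + 1) := by
        gcongr
        exact Real.rpow_le_rpow_add_one (norm_nonneg x) (by positivity) (by linarith)
  calc ‖x - η • v‖ ^ 2 = ‖x‖ ^ 2 - 2 * η * inner ℝ x v + η ^ 2 * ‖v‖ ^ 2 :=
        norm_sub_smul_sq x v hη0
    _ ≤ ‖x‖ ^ 2 - 2 * η * (m * ‖x‖ ^ (1 + γ) - b)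
          + η ^ 2 * (2 * M ^ 2 * ‖x‖ ^ (2 * γ) + 2 * B ^ 2) := by gcongr
    _ ≤ ‖x‖ ^ 2 + 2 * η * (b + m) + 2 * η ^ 2 * B ^ 2 := by linarith

theorem stmt5_general (d : ℕ) (g : EuclideanSpace ℝ (Fin d) → EuclideanSpace ℝ (Fin d))
    (m b M B γ : ℝ) (hm : 0 < m) (hM : 0 < M)
    (hγ0 : 0 < γ) (hγ1 : γ < 1)
    (hdiss : ∀ x, m * ‖x‖ ^ (1 + γ) - b ≤ (inner ℝ x (g x) : ℝ))
    (hgrow : ∀ x, ‖g x‖ ^ 2 ≤ 2 * M ^ 2 * ‖x‖ ^ (2 * γ) + 2 * B ^ 2)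
    (η : ℝ) (hη0 : 0 < η) (hη : η ≤ m / M ^ 2) :
    ∀ x, ‖x - η • g x‖ ^ 2 ≤ ‖x‖ ^ 2 + 2 * η * (b + m) + 2 * η ^ 2 * B ^ 2 := fun x =>
  norm_sub_smul_sq_le_of_dissipative hm hM hγ0.le hγ1.le (hdiss x) (hgrow x) hη0.le hη

theorem stmt5 (d : ℕ) (g : EuclideanSpace ℝ (Fin d) → EuclideanSpace ℝ (Fin d))
    (m b M B γ : ℝ) (hm : 0 < m) (hb : 0 ≤ b) (hM : 0 < M) (hB : 0 ≤ B)
    (hγ0 : 0 < γ) (hγ1 : γ < 1)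
    (hdiss : ∀ x, m * ‖x‖ ^ (1 + γ) - b ≤ (inner ℝ x (g x) : ℝ))
    (hgrow : ∀ x, ‖g x‖ ^ 2 ≤ 2 * M ^ 2 * ‖x‖ ^ (2 * γ) + 2 * B ^ 2)
    (η : ℝ) (hη0 : 0 < η) (hη : η ≤ m / M ^ 2) :
    ∀ x, ‖x - η • g x‖ ^ 2 ≤ ‖x‖ ^ 2 + 2 * η * (b + m) + 2 * η ^ 2 * B ^ 2 :=
  stmt5_general d g m b M B γ hm hM hγ0 hγ1 hdiss hgrow η hη0 hη
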